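/- Let f : Σ_2 → Σ_2 be defined by f(x)(i) = x(i) + x(i+1) (mod 2), and let k be an odd positive integer. Then exactly 2^{k-1} of the 2^k points x with σ^k(x) = x are periodic under f. -/

import Mathlib

/-- The shift map on the full shift `ℤ → A`. -/
def shift {A : Type*} (x : ℤ → A) : ℤ → A := fun i => x (i + 1)

/-- The addition cellular automaton `x ↦ x + σ x` on the 2-shift. -/
def addCA (x : ℤ → ZMod 2) : ℤ → ZMod 2 := fun i => x i + x (i + 1)

/-!
A configuration fixed by `σ^k` is a function on `ℤ/k`, on which `f` acts as
`y ↦ y + y(· + 1)`. The image of this map lies in the hyperplane `H` of configurations with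
sum zero, since every value is counted twice. Its kernel consists of the constants, and for odd
`k` the only constant in `H` is `0`, so it is injective on `H`. Periodic points lie in the image,
hence in `H`; conversely the map permutes the finite set `H`, so every point of `H` is periodic.
Finally `|H| = 2^(k-1)`.
-/

open Function Set

theorem shift_iterate_apply {A : Type*} (n : ℕ) (x : ℤ → A) (i : ℤ) :
    shift^[n] x i = x (i + n) := by
  induction n generalizing x with
  | zero => simp
  | succ n ih =>
    rw [iterate_succ_apply, ih]
    simp only [shift, Nat.cast_succ, add_assoc]

theorem shift_iterate_eq_self_iff {A : Type*} {k : ℕ} [NeZero k] {x : ℤ → A} :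
    shift^[k] x = x ↔ ∃ y : ZMod k → A, y ∘ Int.cast = x := by
  constructor
  · intro hx
    have hper : Periodic x k := fun i => by simpa [shift_iterate_apply] using congrFun hx i
    refine ⟨fun j => x j.val, funext fun i => ?_⟩
    simp only [comp_apply, ZMod.val_intCast, Int.emod_def, mul_comm (k : ℤ)]
    exact hper.sub_int_mul_eq (i / k)
  · rintro ⟨y, rfl⟩
    funext i
    simp [shift_iterate_apply]

theorem Function.Semiconj.isPeriodicPt_iff {α β : Type*} {f : α → β} {ga : α → α} {gb : β → β}
    (h : Semiconj f ga gb) (hf : Injective f) {n : ℕ} {x : α} :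
    IsPeriodicPt gb n (f x) ↔ IsPeriodicPt ga n x := by
  rw [IsPeriodicPt, IsFixedPt, ← (h.iterate_right n).eq, hf.eq_iff]
  rfl

theorem periodicPts_eq_of_range_subset_of_injOn {α : Type*} [Finite α] {f : α → α} {s : Set α}
    (hrange : range f ⊆ s) (hinj : InjOn f s) : periodicPts f = s := by
  refine (periodicPts_subset_range.trans hrange).antisymm fun x hx => ?_
  have hmaps : MapsTo f s s := fun y _ => hrange (mem_range_self y)
  have hsemiconj : Semiconj Subtype.val (hmaps.restrict f s s) f := fun _ => rfl
  exact hsemiconj.mapsTo_periodicPts ((hmaps.restrict_inj.2 hinj).mem_periodicPts ⟨x, hx⟩)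

theorem ncard_setOf_sum_eq_zero {ι G : Type*} [Fintype ι] [Nonempty ι] [AddCommGroup G]
    [Finite G] : {y : ι → G | ∑ i, y i = 0}.ncard = Nat.card G ^ (Fintype.card ι - 1) := by
  classical
  let φ : (ι → G) →+ G := AddMonoidHom.mk' (fun y => ∑ i, y i) fun _ _ => Finset.sum_add_distrib
  have hφ : Surjective φ := fun g => ⟨Pi.single (Classical.arbitrary ι) g, by simp [φ]⟩
  have key := φ.ker.card_mul_index
  rw [AddSubgroup.index_ker, AddMonoidHom.range_eq_top.2 hφ, AddSubgroup.card_top,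
    Nat.card_fun, Nat.card_eq_fintype_card (α := ι)] at key
  obtain ⟨n, hn⟩ := Nat.exists_eq_succ_of_ne_zero (Fintype.card_ne_zero (α := ι))
  rw [hn, pow_succ] at key
  rw [hn, Nat.succ_sub_one, ← Nat.eq_of_mul_eq_mul_right Nat.card_pos key]
  rfl

def cyclicAddCA (k : ℕ) (y : ZMod k → ZMod 2) : ZMod k → ZMod 2 := fun j => y j + y (j + 1)

theorem semiconj_comp_intCast_cyclicAddCA (k : ℕ) :
    Semiconj (fun y : ZMod k → ZMod 2 => y ∘ Int.cast) (cyclicAddCA k) addCA := fun y => by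
  funext i
  simp [addCA, cyclicAddCA]

theorem cyclicAddCA_sub (k : ℕ) (x y : ZMod k → ZMod 2) :
    cyclicAddCA k (x - y) = cyclicAddCA k x - cyclicAddCA k y := by
  funext j
  simp only [cyclicAddCA, Pi.sub_apply]
  ring

section

variable {k : ℕ} [NeZero k]

theorem sum_cyclicAddCA (y : ZMod k → ZMod 2) : ∑ j, cyclicAddCA k y j = 0 := by
  have hrotate : ∑ j, y (j + 1) = ∑ j, y j :=
    Fintype.sum_equiv (Equiv.addRight 1) _ _ fun _ => rfl
  simp only [cyclicAddCA, Finset.sum_add_distrib, hrotate]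
  exact CharTwo.add_self_eq_zero _

theorem apply_eq_apply_zero_of_cyclicAddCA_eq_zero {z : ZMod k → ZMod 2} (hz : cyclicAddCA k z = 0)
    (j : ZMod k) : z j = z 0 := by
  have hstep : ∀ j, z (j + 1) = z j := fun j => by
    have hj : z j + z (j + 1) = 0 := congrFun hz j
    rwa [add_eq_zero_iff_eq_neg', ZMod.neg_eq_self_mod_two] at hj
  rw [← ZMod.natCast_zmod_val j]
  induction j.val with
  | zero => simp
  | succ n ih => rw [Nat.cast_succ, hstep, ih]

theorem cyclicAddCA_injOn (hk : Odd k) : InjOn (cyclicAddCA k) {y | ∑ j, y j = 0} := by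
  intro x hx y hy hxy
  have hz : cyclicAddCA k (x - y) = 0 := by rw [cyclicAddCA_sub, hxy, sub_self]
  have hconst := apply_eq_apply_zero_of_cyclicAddCA_eq_zero hz
  have hsum : ∑ j, (x - y) j = (x - y) 0 := by
    rw [Finset.sum_congr rfl fun j _ => hconst j, Finset.sum_const, Finset.card_univ, ZMod.card,
      nsmul_eq_mul, ZMod.natCast_eq_one_iff_odd.2 hk, one_mul]
  have hzero : (x - y) 0 = 0 := by
    rw [← hsum]
    simp only [Pi.sub_apply, Finset.sum_sub_distrib]
    rw [show ∑ j, x j = 0 from hx, show ∑ j, y j = 0 from hy, sub_zero]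
  exact sub_eq_zero.1 (funext fun j => (hconst j).trans hzero)

theorem periodicPts_cyclicAddCA (hk : Odd k) :
    periodicPts (cyclicAddCA k) = {y | ∑ j, y j = 0} :=
  periodicPts_eq_of_range_subset_of_injOn (range_subset_iff.2 sum_cyclicAddCA)
    (cyclicAddCA_injOn hk)

theorem setOf_shift_fixed_addCA_periodic_eq_image :
    {x : ℤ → ZMod 2 | shift^[k] x = x ∧ ∃ p, 1 ≤ p ∧ addCA^[p] x = x} =
      (fun y : ZMod k → ZMod 2 => y ∘ Int.cast) '' periodicPts (cyclicAddCA k) := by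
  have hperiodic {p : ℕ} {y : ZMod k → ZMod 2} :
      IsPeriodicPt addCA p (y ∘ Int.cast) ↔ IsPeriodicPt (cyclicAddCA k) p y :=
    (semiconj_comp_intCast_cyclicAddCA k).isPeriodicPt_iff
      ZMod.intCast_surjective.injective_comp_right
  ext x
  simp only [mem_ofPred_eq, shift_iterate_eq_self_iff, mem_image, mem_periodicPts]
  constructor
  · rintro ⟨⟨y, rfl⟩, p, hp, hx⟩
    exact ⟨y, ⟨p, hp, hperiodic.1 hx⟩, rfl⟩
  · rintro ⟨y, ⟨p, hp, hy⟩, rfl⟩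
    exact ⟨⟨y, rfl⟩, p, hp, hperiodic.2 hy⟩

end

theorem stmt10_general (k : ℕ) (hodd : Odd k) :
    ({x : ℤ → ZMod 2 | shift^[k] x = x ∧ ∃ p, 1 ≤ p ∧ addCA^[p] x = x}).ncard =
      2 ^ (k - 1) := by
  have : NeZero k := ⟨hodd.pos.ne'⟩
  rw [setOf_shift_fixed_addCA_periodic_eq_image,
    ncard_image_of_injective _ ZMod.intCast_surjective.injective_comp_right,
    periodicPts_cyclicAddCA hodd, ncard_setOf_sum_eq_zero, Nat.card_zmod, ZMod.card]

theorem stmt10 (k : ℕ) (hk : 1 ≤ k) (hodd : Odd k) :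
    ({x : ℤ → ZMod 2 | shift^[k] x = x ∧ ∃ p, 1 ≤ p ∧ addCA^[p] x = x}).ncard =
      2 ^ (k - 1) :=
  stmt10_general k hodd
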